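/- Let T be a quantum channel satisfying s-detailed balance with respect to a full-rank state ρ. Then for every matrix A, ⟨T(A), T(A)⟩_{*s} ≤ ⟨A, A⟩_{*s}, where ⟨A,B⟩_{*s} := tr(A† ρ^{s−1} B ρ^{−s}). If moreover T has ρ as its unique fixed point, its spectrum is in [0,1], and A ≠ 0 is traceless, then the inequality is strict. -/

import Mathlib

open Matrix
open scoped ComplexOrder

/-- Real matrix power of a Hermitian matrix, via the functional calculus. -/
noncomputable def mpow {n : Type*} [Fintype n] [DecidableEq n]
    (ρ : Matrix n n ℂ) (hρ : ρ.IsHermitian) (r : ℝ) : Matrix n n ℂ :=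
  hρ.cfc (fun x => x ^ r)

/-- The weighted sesquilinear form `⟨A,B⟩_{*s} = tr(Aᴴ ρ^{s-1} B ρ^{-s})`. -/
noncomputable def wInnerStar {n : Type*} [Fintype n] [DecidableEq n]
    (ρ : Matrix n n ℂ) (hρ : ρ.IsHermitian) (s : ℝ) (A B : Matrix n n ℂ) : ℂ :=
  (Aᴴ * mpow ρ hρ (s - 1) * B * mpow ρ hρ (-s)).trace

/-!
Write `Γ A = ρ^(1-s) A ρ^s`. Detailed balance `T ∘ Γ = Γ ∘ T†` makes `T` self-adjoint for
`⟨·,·⟩_{*s}`, and under `A ↦ ρ^((s-1)/2) A ρ^(-s/2)` this form becomes the Hilbert–Schmidt inner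
product, so `T` is a symmetric operator on a Euclidean space and is controlled by its eigenvalues.
An eigenvalue `μ` of `T` is also one of the unital positive map `T† = ∑ K† · K`, with a Hermitian
eigenvector `W`. If `r` is a spectral value of `W` of largest modulus, applying `T†` to
`-|r| ≤ W ≤ |r|` gives `-|r| ≤ μ W ≤ |r|`, and evaluating at the spectral value `μ r` of `μ W`
gives `|μ| ≤ 1`.

For the strict inequality, the real and imaginary parts of a fixed point of `T` are Hermitian fixed
points; adding a large multiple of `ρ` makes such a point positive, so uniqueness of the fixed state
shows it is a real multiple of `ρ`. Thus the eigenvalue `1` has eigenspace `ℂ ρ`, which is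
`*s`-orthogonal to every traceless `A` because `⟨ρ, A⟩_{*s} = tr A`, and the remaining eigenvalues
lie in `[0, 1)`.
-/

open scoped MatrixOrder InnerProductSpace

section PositiveMap

variable {A : Type*} [Ring A] [StarRing A] [TopologicalSpace A] [Algebra ℝ A] [PartialOrder A]
  [StarOrderedRing A] [ContinuousFunctionalCalculus ℝ A IsSelfAdjoint] [NonnegSpectrumClass ℝ A]

lemma PositiveLinearMap.abs_le_one_of_apply_eq_smul [StarModule ℝ A] (Φ : A →ₚ[ℝ] A)
    (hΦ : Φ 1 = 1) {a : A} (ha : IsSelfAdjoint a) (ha0 : a ≠ 0) {μ : ℝ} (h : Φ a = μ • a) :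
    |μ| ≤ 1 := by
  nontriviality A
  obtain ⟨r, hr, hmax⟩ :=
    (ContinuousFunctionalCalculus.isCompact_spectrum (R := ℝ) a).exists_isMaxOn
      (ContinuousFunctionalCalculus.spectrum_nonempty a ha) (continuous_abs (G := ℝ)).continuousOn
  have hr0 : r ≠ 0 := by
    rintro rfl
    refine ha0 (CFC.eq_zero_of_spectrum_subset_zero (R := ℝ) a (fun x hx => ?_) ha)
    simpa using hmax hx
  have hΦ_alg (c : ℝ) : Φ (algebraMap ℝ A c) = algebraMap ℝ A c := by
    rw [Algebra.algebraMap_eq_smul_one, map_smul, hΦ]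
  have hlower : algebraMap ℝ A (-|r|) ≤ a := (algebraMap_le_iff_le_spectrum ha).2 fun x hx =>
    neg_le_of_abs_le (hmax hx)
  have hupper : a ≤ algebraMap ℝ A |r| := (le_algebraMap_iff_spectrum_le ha).2 fun x hx =>
    le_of_abs_le (hmax hx)
  have hμa : IsSelfAdjoint (μ • a) := (IsSelfAdjoint.all μ).smul ha
  have hmem : μ * r ∈ spectrum ℝ (μ • a) := by
    rw [spectrum.smul_eq_smul _ _ ⟨r, hr⟩]
    exact Set.smul_mem_smul_set hr
  have hlower' : algebraMap ℝ A (-|r|) ≤ μ • a := by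
    simpa only [hΦ_alg, h] using OrderHomClass.mono Φ hlower
  have hupper' : μ • a ≤ algebraMap ℝ A |r| := by
    simpa only [hΦ_alg, h] using OrderHomClass.mono Φ hupper
  have h1 := (algebraMap_le_iff_le_spectrum hμa).1 hlower' _ hmem
  have h2 := (le_algebraMap_iff_spectrum_le hμa).1 hupper' _ hmem
  have : |μ| * |r| ≤ 1 * |r| := by rw [← abs_mul, one_mul]; exact abs_le.2 ⟨h1, h2⟩
  exact le_of_mul_le_mul_right this (abs_pos.2 hr0)

lemma exists_nonneg_smul_add [PosSMulMono ℝ A] {ρ y : A} (hρ : IsStrictlyPositive ρ)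
    (hy : IsSelfAdjoint y) : ∃ c : ℝ, 0 ≤ c • ρ + y := by
  nontriviality A
  obtain ⟨ε, hε, hερ⟩ := (CFC.exists_pos_algebraMap_le_iff hρ.isSelfAdjoint).2
    fun x hx => hρ.spectrum_pos hx
  obtain ⟨m, hm⟩ := (ContinuousFunctionalCalculus.isCompact_spectrum (R := ℝ) y).bddBelow
  refine ⟨|m| / ε, ?_⟩
  have hy' : algebraMap ℝ A (-|m|) ≤ y :=
    (algebraMap_le_iff_le_spectrum hy).2 fun x hx => (neg_abs_le m).trans (hm hx)
  calc (0 : A) = (|m| / ε) • algebraMap ℝ A ε + algebraMap ℝ A (-|m|) := by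
        rw [Algebra.smul_def, ← map_mul, div_mul_cancel₀ _ hε.ne', ← map_add, add_neg_cancel,
          map_zero]
    _ ≤ (|m| / ε) • ρ + y := add_le_add (smul_le_smul_of_nonneg_left hερ (by positivity)) hy'

end PositiveMap

section SymmetricContraction

variable {E : Type*} [NormedAddCommGroup E] [InnerProductSpace ℂ E] [FiniteDimensional ℂ E]
  {M : E →ₗ[ℂ] E}

lemma LinearMap.IsSymmetric.norm_sq_apply_eq_sum (hM : M.IsSymmetric) (x : E) :
    ‖M x‖ ^ 2 = ∑ i, hM.eigenvalues rfl i ^ 2 * ‖⟪hM.eigenvectorBasis rfl i, x⟫_ℂ‖ ^ 2 := by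
  rw [← (hM.eigenvectorBasis rfl).sum_sq_norm_inner_right]
  refine Finset.sum_congr rfl fun i _ => ?_
  rw [← OrthonormalBasis.repr_apply_apply, ← OrthonormalBasis.repr_apply_apply,
    hM.eigenvectorBasis_apply_self_apply, norm_mul, mul_pow]
  simp

lemma LinearMap.IsSymmetric.norm_apply_le (hM : M.IsSymmetric)
    (h : ∀ μ : ℝ, Module.End.HasEigenvalue M μ → |μ| ≤ 1) (x : E) : ‖M x‖ ≤ ‖x‖ := by
  refine (pow_le_pow_iff_left₀ (norm_nonneg _) (norm_nonneg _) two_ne_zero).1 ?_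
  rw [hM.norm_sq_apply_eq_sum, ← (hM.eigenvectorBasis rfl).sum_sq_norm_inner_right]
  gcongr with i
  exact mul_le_of_le_one_left (by positivity)
    (sq_le_one_iff_abs_le_one _ |>.2 (h _ (hM.hasEigenvalue_eigenvalues rfl i)))

lemma LinearMap.IsSymmetric.norm_apply_lt (hM : M.IsSymmetric)
    (h : ∀ μ : ℝ, Module.End.HasEigenvalue M μ → μ ∈ Set.Ioc (-1) 1) {x : E}
    (hx : ∀ y, M y = y → ⟪y, x⟫_ℂ = 0) (hx0 : x ≠ 0) : ‖M x‖ < ‖x‖ := by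
  set b := hM.eigenvectorBasis rfl
  set ev := hM.eigenvalues rfl
  have hev i : ev i ∈ Set.Ioc (-1) 1 := h _ (hM.hasEigenvalue_eigenvalues rfl i)
  refine (pow_lt_pow_iff_left₀ (norm_nonneg _) (norm_nonneg _) two_ne_zero).1 ?_
  rw [hM.norm_sq_apply_eq_sum, ← b.sum_sq_norm_inner_right]
  obtain ⟨i, -, hi⟩ : ∃ i ∈ Finset.univ, ‖⟪b i, x⟫_ℂ‖ ^ 2 ≠ 0 := by
    refine Finset.exists_ne_zero_of_sum_ne_zero ?_
    rw [b.sum_sq_norm_inner_right]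
    positivity
  have hevi : ev i ≠ 1 := fun h1 => hi <| by
    have hb : M (b i) = (ev i : ℂ) • b i := hM.apply_eigenvectorBasis rfl i
    rw [hx (b i) (by rw [hb, h1, Complex.ofReal_one, one_smul])]
    simp
  refine Finset.sum_lt_sum (fun j _ => mul_le_of_le_one_left (by positivity) ?_) ⟨i, by simp, ?_⟩
  · nlinarith [(hev j).1, (hev j).2]
  · refine mul_lt_of_lt_one_left (by positivity) ?_
    nlinarith [(hev i).1, lt_of_le_of_ne (hev i).2 hevi]

end SymmetricContraction

lemma LinearEquiv.exists_apply_eq_smul_of_hasEigenvalue_conj {R V W : Type*} [CommRing R]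
    [AddCommGroup V] [Module R V] [AddCommGroup W] [Module R W] (e : V ≃ₗ[R] W)
    {f : Module.End R V} {μ : R} (h : (e.conj f).HasEigenvalue μ) :
    ∃ v, v ≠ 0 ∧ f v = μ • v := by
  obtain ⟨w, hw⟩ := h.exists_hasEigenvector
  refine ⟨e.symm w, by simpa using hw.2, e.injective ?_⟩
  simpa [LinearEquiv.conj_apply] using hw.apply_eq_smul

section StarModule

open scoped ComplexStarModule

variable {A : Type*} [AddCommGroup A] [Module ℂ A] [StarAddMonoid A] [StarModule ℂ A]
  {f : A →ₗ[ℂ] A} {a : A} {μ : ℝ}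

lemma apply_realPart_eq_smul (hf : ∀ a, f (star a) = star (f a)) (h : f a = (μ : ℂ) • a) :
    f (ℜ a) = (μ : ℂ) • (ℜ a : A) := by
  simp [realPart_apply_coe, hf, h, smul_comm (μ : ℂ), ← Complex.coe_smul]

lemma apply_imaginaryPart_eq_smul (hf : ∀ a, f (star a) = star (f a)) (h : f a = (μ : ℂ) • a) :
    f (ℑ a) = (μ : ℂ) • (ℑ a : A) := by
  simp [imaginaryPart_apply_coe, hf, h, smul_comm (μ : ℂ), ← Complex.coe_smul, smul_sub]

lemma exists_isSelfAdjoint_apply_eq_smul (hf : ∀ a, f (star a) = star (f a)) (ha : a ≠ 0)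
    (h : f a = (μ : ℂ) • a) : ∃ b : A, IsSelfAdjoint b ∧ b ≠ 0 ∧ f b = (μ : ℂ) • b := by
  by_cases hre : (ℜ a : A) = 0
  · refine ⟨ℑ a, (ℑ a).2, fun him => ha ?_, apply_imaginaryPart_eq_smul hf h⟩
    rw [← realPart_add_I_smul_imaginaryPart a, hre, him, smul_zero, add_zero]
  · exact ⟨ℜ a, (ℜ a).2, hre, apply_realPart_eq_smul hf h⟩

end StarModule

section Mpow

variable {n : Type*} [Fintype n] [DecidableEq n] {ρ : Matrix n n ℂ}

lemma mpow_eq_cfc (hρ : ρ.IsHermitian) (r : ℝ) : mpow ρ hρ r = cfc (fun x : ℝ => x ^ r) ρ :=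
  (hρ.cfc_eq _).symm

lemma isHermitian_mpow (hρ : ρ.IsHermitian) (r : ℝ) : (mpow ρ hρ r).IsHermitian := by
  rw [mpow_eq_cfc, isHermitian_iff_isSelfAdjoint]
  exact cfc_predicate _ _

lemma mpow_zero (hρ : ρ.IsHermitian) : mpow ρ hρ 0 = 1 := by
  simpa [mpow_eq_cfc] using cfc_const_one ℝ ρ hρ.isSelfAdjoint

lemma mpow_one (hρ : ρ.IsHermitian) : mpow ρ hρ 1 = ρ := by
  simpa [mpow_eq_cfc] using cfc_id' ℝ ρ hρ.isSelfAdjoint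

lemma mpow_add (hρ : ρ.PosDef) (a b : ℝ) :
    mpow ρ hρ.1 (a + b) = mpow ρ hρ.1 a * mpow ρ hρ.1 b := by
  simp only [mpow_eq_cfc]
  rw [← cfc_mul _ _ ρ (finite_real_spectrum.continuousOn _) (finite_real_spectrum.continuousOn _)]
  exact cfc_congr fun x hx => Real.rpow_add (hρ.isStrictlyPositive.spectrum_pos hx) a b

lemma mpow_mul_mpow_neg (hρ : ρ.PosDef) (a : ℝ) : mpow ρ hρ.1 a * mpow ρ hρ.1 (-a) = 1 := by
  rw [← mpow_add hρ, add_neg_cancel, mpow_zero]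

lemma mpow_neg_mul_mpow (hρ : ρ.PosDef) (a : ℝ) : mpow ρ hρ.1 (-a) * mpow ρ hρ.1 a = 1 := by
  rw [← mpow_add hρ, neg_add_cancel, mpow_zero]

noncomputable def mpowSandwich (hρ : ρ.PosDef) (a b : ℝ) : Matrix n n ℂ ≃ₗ[ℂ] Matrix n n ℂ where
  toFun A := mpow ρ hρ.1 a * A * mpow ρ hρ.1 b
  invFun A := mpow ρ hρ.1 (-a) * A * mpow ρ hρ.1 (-b)
  map_add' A B := by simp only [mul_add, add_mul]
  map_smul' c A := by simp
  left_inv A := by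
    simp only [← mul_assoc, mpow_neg_mul_mpow hρ, one_mul]
    rw [mul_assoc, mpow_mul_mpow_neg hρ, mul_one]
  right_inv A := by
    simp only [← mul_assoc, mpow_mul_mpow_neg hρ, one_mul]
    rw [mul_assoc, mpow_neg_mul_mpow hρ, mul_one]

lemma mpowSandwich_apply (hρ : ρ.PosDef) (a b : ℝ) (A : Matrix n n ℂ) :
    mpowSandwich hρ a b A = mpow ρ hρ.1 a * A * mpow ρ hρ.1 b := rfl

lemma mpowSandwich_symm_apply (hρ : ρ.PosDef) (a b : ℝ) (A : Matrix n n ℂ) :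
    (mpowSandwich hρ a b).symm A = mpow ρ hρ.1 (-a) * A * mpow ρ hρ.1 (-b) := rfl

end Mpow

section HilbertSchmidt

variable {n : Type*} [Fintype n]

noncomputable def hilbertSchmidtEquiv : Matrix n n ℂ ≃ₗ[ℂ] EuclideanSpace ℂ (n × n) where
  toFun A := WithLp.toLp 2 A.vec
  invFun x := Matrix.of fun i j => x (j, i)
  map_add' _ _ := rfl
  map_smul' _ _ := rfl
  left_inv _ := rfl
  right_inv _ := rfl

lemma inner_hilbertSchmidtEquiv (A B : Matrix n n ℂ) :
    ⟪hilbertSchmidtEquiv A, hilbertSchmidtEquiv B⟫_ℂ = (Aᴴ * B).trace := by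
  rw [← star_vec_dotProduct_vec, dotProduct_comm]
  rfl

end HilbertSchmidt

section StarInner

variable {n : Type*} [Fintype n] [DecidableEq n] {ρ : Matrix n n ℂ}

lemma wInnerStar_eq_trace_mul (hρ : ρ.PosDef) (s : ℝ) (A B : Matrix n n ℂ) :
    wInnerStar ρ hρ.1 s A B = (Aᴴ * (mpowSandwich hρ (1 - s) s).symm B).trace := by
  rw [wInnerStar, mpowSandwich_symm_apply, neg_sub]
  simp only [mul_assoc]

lemma wInnerStar_self_left (hρ : ρ.PosDef) (s : ℝ) (B : Matrix n n ℂ) :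
    wInnerStar ρ hρ.1 s ρ B = B.trace := by
  conv_lhs => rw [wInnerStar, hρ.1.eq]
  nth_rw 1 [← mpow_one hρ.1]
  rw [← mpow_add hρ, add_sub_cancel, trace_mul_cycle, ← mpow_add hρ, neg_add_cancel, mpow_zero,
    one_mul]

noncomputable def starEmbedding (hρ : ρ.PosDef) (s : ℝ) :
    Matrix n n ℂ ≃ₗ[ℂ] EuclideanSpace ℂ (n × n) :=
  (mpowSandwich hρ ((s - 1) / 2) (-(s / 2))).trans hilbertSchmidtEquiv

lemma inner_starEmbedding (hρ : ρ.PosDef) (s : ℝ) (A B : Matrix n n ℂ) :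
    ⟪starEmbedding hρ s A, starEmbedding hρ s B⟫_ℂ = wInnerStar ρ hρ.1 s A B := by
  have hP : mpow ρ hρ.1 (s - 1) = mpow ρ hρ.1 ((s - 1) / 2) * mpow ρ hρ.1 ((s - 1) / 2) := by
    rw [← mpow_add hρ, add_halves]
  have hQ : mpow ρ hρ.1 (-s) = mpow ρ hρ.1 (-(s / 2)) * mpow ρ hρ.1 (-(s / 2)) := by
    rw [← mpow_add hρ, ← neg_add, add_halves]
  rw [starEmbedding, LinearEquiv.trans_apply, LinearEquiv.trans_apply, inner_hilbertSchmidtEquiv,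
    mpowSandwich_apply, mpowSandwich_apply, conjTranspose_mul, conjTranspose_mul,
    (isHermitian_mpow hρ.1 _).eq, (isHermitian_mpow hρ.1 _).eq, wInnerStar, hP, hQ]
  simp only [mul_assoc]
  rw [trace_mul_comm]
  simp only [mul_assoc]

lemma re_wInnerStar_self (hρ : ρ.PosDef) (s : ℝ) (A : Matrix n n ℂ) :
    (wInnerStar ρ hρ.1 s A A).re = ‖starEmbedding hρ s A‖ ^ 2 := by
  rw [← inner_starEmbedding hρ]
  exact inner_self_eq_norm_sq (𝕜 := ℂ) _

lemma isSymmetric_conj_starEmbedding (hρ : ρ.PosDef) (s : ℝ) {T : Matrix n n ℂ →ₗ[ℂ] Matrix n n ℂ}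
    (hT : ∀ A B, wInnerStar ρ hρ.1 s (T A) B = wInnerStar ρ hρ.1 s A (T B)) :
    ((starEmbedding hρ s).conj T).IsSymmetric := by
  intro x y
  obtain ⟨A, rfl⟩ := (starEmbedding hρ s).surjective x
  obtain ⟨B, rfl⟩ := (starEmbedding hρ s).surjective y
  simp only [LinearEquiv.conj_apply_apply, LinearEquiv.symm_apply_apply, inner_starEmbedding, hT]

end StarInner

section DetailedBalance

variable {n : Type*} [Fintype n] [DecidableEq n] {ρ : Matrix n n ℂ}
  {T Tdual : Matrix n n ℂ →ₗ[ℂ] Matrix n n ℂ} {s : ℝ}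

lemma apply_mpowSandwich_symm (hρ : ρ.PosDef)
    (hDB : ∀ A, T (mpowSandwich hρ (1 - s) s A) = mpowSandwich hρ (1 - s) s (Tdual A))
    (B : Matrix n n ℂ) :
    Tdual ((mpowSandwich hρ (1 - s) s).symm B) = (mpowSandwich hρ (1 - s) s).symm (T B) := by
  rw [LinearEquiv.eq_symm_apply, ← hDB, LinearEquiv.apply_symm_apply]

lemma wInnerStar_apply_left_eq_apply_right (hρ : ρ.PosDef)
    (hadj : ∀ A B, (Aᴴ * Tdual B).trace = ((T A)ᴴ * B).trace)
    (hDB : ∀ A, T (mpowSandwich hρ (1 - s) s A) = mpowSandwich hρ (1 - s) s (Tdual A))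
    (A B : Matrix n n ℂ) :
    wInnerStar ρ hρ.1 s (T A) B = wInnerStar ρ hρ.1 s A (T B) := by
  rw [wInnerStar_eq_trace_mul hρ, wInnerStar_eq_trace_mul hρ, ← hadj,
    apply_mpowSandwich_symm hρ hDB]

end DetailedBalance

section Kraus

variable {n ι : Type*} [Fintype n] [Fintype ι]

def krausMap (K : ι → Matrix n n ℂ) : Matrix n n ℂ →ₗ[ℂ] Matrix n n ℂ where
  toFun X := ∑ u, K u * X * (K u)ᴴ
  map_add' X Y := by simp only [mul_add, add_mul, Finset.sum_add_distrib]
  map_smul' c X := by simp [Finset.smul_sum]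

lemma krausMap_apply (K : ι → Matrix n n ℂ) (X : Matrix n n ℂ) :
    krausMap K X = ∑ u, K u * X * (K u)ᴴ := rfl

lemma krausMap_star (K : ι → Matrix n n ℂ) (X : Matrix n n ℂ) :
    krausMap K (star X) = star (krausMap K X) := by
  simp [krausMap_apply, star_eq_conjTranspose, mul_assoc]

lemma Matrix.PosSemidef.krausMap (K : ι → Matrix n n ℂ) {X : Matrix n n ℂ} (hX : X.PosSemidef) :
    (krausMap K X).PosSemidef :=
  posSemidef_sum _ fun u _ => hX.mul_mul_conjTranspose_same (K u)

lemma eq_krausMap_conjTranspose_of_trace {K : ι → Matrix n n ℂ}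
    {D : Matrix n n ℂ →ₗ[ℂ] Matrix n n ℂ}
    (hD : ∀ A B, (Aᴴ * D B).trace = ((krausMap K A)ᴴ * B).trace) :
    D = krausMap fun u => (K u)ᴴ := by
  refine LinearMap.ext fun B => ext_iff_trace_mul_left.2 fun A => ?_
  rw [← conjTranspose_conjTranspose A, hD]
  simp only [krausMap_apply, conjTranspose_sum, Finset.sum_mul, Finset.mul_sum, trace_sum,
    conjTranspose_mul, conjTranspose_conjTranspose]
  refine Finset.sum_congr rfl fun u _ => ?_
  rw [← trace_mul_cycle]
  simp only [mul_assoc]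

variable [DecidableEq n]

lemma abs_le_one_of_krausMap_apply_eq_smul {L : ι → Matrix n n ℂ} (hL : ∑ u, L u * (L u)ᴴ = 1)
    {μ : ℝ} {X : Matrix n n ℂ} (hX : X ≠ 0) (h : krausMap L X = (μ : ℂ) • X) : |μ| ≤ 1 := by
  obtain ⟨W, hW, hW0, hLW⟩ := exists_isSelfAdjoint_apply_eq_smul (krausMap_star L) hX h
  let Φ : Matrix n n ℂ →ₚ[ℝ] Matrix n n ℂ := .mk₀ ((krausMap L).restrictScalars ℝ)
    fun Y hY => (hY.posSemidef.krausMap L).nonneg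
  refine Φ.abs_le_one_of_apply_eq_smul ?_ hW hW0 ?_
  · show krausMap L 1 = 1
    simpa [krausMap_apply] using hL
  · show krausMap L W = μ • W
    rw [hLW, Complex.coe_smul]

end Kraus

section FixedStates

open scoped ComplexStarModule

variable {n : Type*} [Fintype n] {ρ : Matrix n n ℂ} {T : Matrix n n ℂ →ₗ[ℂ] Matrix n n ℂ}

lemma eq_trace_smul_of_apply_eq_self
    (huniq : ∀ σ : Matrix n n ℂ, σ.PosSemidef → σ.trace = 1 → T σ = σ → σ = ρ)
    {σ : Matrix n n ℂ} (hσ : σ.PosSemidef) (hTσ : T σ = σ) : σ = σ.trace • ρ := by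
  by_cases h0 : σ.trace = 0
  · rw [h0, zero_smul]
    exact hσ.trace_eq_zero_iff.1 h0
  have hρ := huniq (σ.trace⁻¹ • σ) (hσ.smul (inv_nonneg.2 hσ.trace_nonneg))
    (by rw [trace_smul, smul_eq_mul, inv_mul_cancel₀ h0]) (by rw [map_smul, hTσ])
  rw [← hρ, smul_smul, mul_inv_cancel₀ h0, one_smul]

variable [DecidableEq n]

lemma exists_eq_smul_of_isSelfAdjoint_of_apply_eq_self (hρ : ρ.PosDef) (hTρ : T ρ = ρ)
    (huniq : ∀ σ : Matrix n n ℂ, σ.PosSemidef → σ.trace = 1 → T σ = σ → σ = ρ)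
    {Y : Matrix n n ℂ} (hY : IsSelfAdjoint Y) (hTY : T Y = Y) : ∃ t : ℝ, Y = (t : ℂ) • ρ := by
  obtain ⟨c, hc⟩ := exists_nonneg_smul_add hρ.isStrictlyPositive hY
  have hσ := eq_trace_smul_of_apply_eq_self huniq hc.posSemidef
    (by rw [map_add, LinearMap.map_smul_of_tower, hTρ, hTY])
  have htr : (c • ρ + Y).trace = ((c • ρ + Y).trace.re : ℂ) :=
    Complex.eq_re_of_ofReal_le (r := 0) <| by
      rw [Complex.ofReal_zero]
      exact hc.posSemidef.trace_nonneg
  refine ⟨(c • ρ + Y).trace.re - c, ?_⟩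
  rw [Complex.ofReal_sub, sub_smul, ← htr, ← hσ, Complex.coe_smul, add_sub_cancel_left]

lemma exists_eq_smul_of_apply_eq_self (hρ : ρ.PosDef) (hTρ : T ρ = ρ)
    (hTstar : ∀ X, T (star X) = star (T X))
    (huniq : ∀ σ : Matrix n n ℂ, σ.PosSemidef → σ.trace = 1 → T σ = σ → σ = ρ)
    {X : Matrix n n ℂ} (hTX : T X = X) : ∃ z : ℂ, X = z • ρ := by
  have h1 : T X = ((1 : ℝ) : ℂ) • X := by rw [Complex.ofReal_one, one_smul, hTX]
  obtain ⟨a, ha⟩ := exists_eq_smul_of_isSelfAdjoint_of_apply_eq_self hρ hTρ huniq (ℜ X).2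
    (by simpa using apply_realPart_eq_smul hTstar h1)
  obtain ⟨b, hb⟩ := exists_eq_smul_of_isSelfAdjoint_of_apply_eq_self hρ hTρ huniq (ℑ X).2
    (by simpa using apply_imaginaryPart_eq_smul hTstar h1)
  refine ⟨a + Complex.I * b, ?_⟩
  rw [← realPart_add_I_smul_imaginaryPart X, ha, hb, smul_smul, ← add_smul]

end FixedStates

theorem channel_contraction_star_inner_general {n ι : Type*} [Fintype n] [DecidableEq n] [Fintype ι]
    (ρ : Matrix n n ℂ) (hρ : ρ.PosDef)
    (s : ℝ)
    (T Tdual : Matrix n n ℂ →ₗ[ℂ] Matrix n n ℂ)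
    (K : ι → Matrix n n ℂ)
    (hKraus : ∀ X : Matrix n n ℂ, T X = ∑ u, K u * X * (K u)ᴴ)
    (hTP : ∑ u, (K u)ᴴ * K u = 1)
    (hadj : ∀ A B : Matrix n n ℂ, (Aᴴ * Tdual B).trace = ((T A)ᴴ * B).trace)
    (hDB : ∀ A : Matrix n n ℂ,
      T (mpow ρ hρ.1 (1 - s) * A * mpow ρ hρ.1 s)
        = mpow ρ hρ.1 (1 - s) * Tdual A * mpow ρ hρ.1 s) :
    (∀ A : Matrix n n ℂ,
      (wInnerStar ρ hρ.1 s (T A) (T A)).re ≤ (wInnerStar ρ hρ.1 s A A).re)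
    ∧ ((T ρ = ρ)
        → (∀ σ : Matrix n n ℂ, σ.PosSemidef → σ.trace = 1 → T σ = σ → σ = ρ)
        → (∀ (μ : ℂ) (X : Matrix n n ℂ), X ≠ 0 → T X = μ • X →
            μ.im = 0 ∧ 0 ≤ μ.re ∧ μ.re ≤ 1)
        → ∀ A : Matrix n n ℂ, A ≠ 0 → A.trace = 0 →
            (wInnerStar ρ hρ.1 s (T A) (T A)).re < (wInnerStar ρ hρ.1 s A A).re) := by
  obtain rfl : T = krausMap K := LinearMap.ext hKraus
  obtain rfl : Tdual = krausMap fun u => (K u)ᴴ := eq_krausMap_conjTranspose_of_trace hadj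
  set E := starEmbedding hρ s
  have hM : (E.conj (krausMap K)).IsSymmetric :=
    isSymmetric_conj_starEmbedding hρ s (wInnerStar_apply_left_eq_apply_right hρ hadj hDB)
  have hME A : E.conj (krausMap K) (E A) = E (krausMap K A) := by simp
  refine ⟨fun A => ?_, fun hTρ huniq hspec A hA0 htrA => ?_⟩
  · rw [re_wInnerStar_self hρ, re_wInnerStar_self hρ, ← hME]
    refine pow_le_pow_left₀ (norm_nonneg _) (hM.norm_apply_le (fun μ hμ => ?_) _) 2
    obtain ⟨X, hX0, hX⟩ := E.exists_apply_eq_smul_of_hasEigenvalue_conj hμ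
    refine abs_le_one_of_krausMap_apply_eq_smul (L := fun u => (K u)ᴴ) (by simpa using hTP)
      ((mpowSandwich hρ (1 - s) s).symm.map_ne_zero_iff.2 hX0) ?_
    rw [apply_mpowSandwich_symm hρ hDB, hX, map_smul]
  · rw [re_wInnerStar_self hρ, re_wInnerStar_self hρ, ← hME]
    refine pow_lt_pow_left₀ (hM.norm_apply_lt (fun μ hμ => ?_) (fun y hy => ?_)
      (E.map_ne_zero_iff.2 hA0)) (norm_nonneg _) two_ne_zero
    · obtain ⟨X, hX0, hX⟩ := E.exists_apply_eq_smul_of_hasEigenvalue_conj hμ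
      obtain ⟨-, h0, h1⟩ := hspec μ X hX0 hX
      exact ⟨by rw [Complex.ofReal_re] at h0; linarith, by simpa using h1⟩
    · obtain ⟨z, hz⟩ := exists_eq_smul_of_apply_eq_self hρ hTρ (krausMap_star K) huniq
        (show krausMap K (E.symm y) = E.symm y by simpa using congrArg E.symm hy)
      rw [← E.apply_symm_apply y, hz, map_smul, inner_smul_left, inner_starEmbedding hρ,
        wInnerStar_self_left hρ, htrA, mul_zero]

/-- A detailed-balanced quantum channel `T` is a contraction for the inner product
`⟨·,·⟩_{*s}`; if moreover `ρ` is its unique fixed state, its spectrum lies in `[0,1]`, and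
`A ≠ 0` is traceless, the contraction is strict. -/
theorem channel_contraction_star_inner {n ι : Type*} [Fintype n] [DecidableEq n] [Fintype ι]
    (ρ : Matrix n n ℂ) (hρ : ρ.PosDef) (htr : ρ.trace = 1)
    (s : ℝ) (hs : s ∈ Set.Icc (0 : ℝ) 1)
    (T Tdual : Matrix n n ℂ →ₗ[ℂ] Matrix n n ℂ)
    (K : ι → Matrix n n ℂ)
    (hKraus : ∀ X : Matrix n n ℂ, T X = ∑ u, K u * X * (K u)ᴴ)
    (hTP : ∑ u, (K u)ᴴ * K u = 1)
    (hadj : ∀ A B : Matrix n n ℂ, (Aᴴ * Tdual B).trace = ((T A)ᴴ * B).trace)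
    (hDB : ∀ A : Matrix n n ℂ,
      T (mpow ρ hρ.1 (1 - s) * A * mpow ρ hρ.1 s)
        = mpow ρ hρ.1 (1 - s) * Tdual A * mpow ρ hρ.1 s) :
    (∀ A : Matrix n n ℂ,
      (wInnerStar ρ hρ.1 s (T A) (T A)).re ≤ (wInnerStar ρ hρ.1 s A A).re)
    ∧ ((T ρ = ρ)
        → (∀ σ : Matrix n n ℂ, σ.PosSemidef → σ.trace = 1 → T σ = σ → σ = ρ)
        → (∀ (μ : ℂ) (X : Matrix n n ℂ), X ≠ 0 → T X = μ • X →
            μ.im = 0 ∧ 0 ≤ μ.re ∧ μ.re ≤ 1)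
        → ∀ A : Matrix n n ℂ, A ≠ 0 → A.trace = 0 →
            (wInnerStar ρ hρ.1 s (T A) (T A)).re < (wInnerStar ρ hρ.1 s A A).re) :=
  channel_contraction_star_inner_general ρ hρ s T Tdual K hKraus hTP hadj hDB
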